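/- arXiv:2410.06337 — 2 statements merged into one kernel-verified Lean document; each statement's English description precedes it below -/
import Mathlib

section
/- Let G = (V,E) be a graph, C', I' disjoint vertex subsets, and x ∉ C' ∪ I' a vertex of degree exactly 1 in G. Then G has a monopolar partition extending (C', I') if and only if G − x has a monopolar partition extending (C', I'). -/
open SimpleGraph

variable {V : Type*}

def IsIndepSet (G : SimpleGraph V) (I : Set V) : Prop :=
  ∀ ⦃u v : V⦄, u ∈ I → v ∈ I → ¬ G.Adj u v

def IsClusterSet (G : SimpleGraph V) (C : Set V) : Prop :=
  ∀ ⦃u v w : V⦄, u ∈ C → v ∈ C → w ∈ C → G.Adj u v → G.Adj v w → u ≠ w → G.Adj u w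

def IsMonopolarPartition (G : SimpleGraph V) (C I : Set V) : Prop :=
  Disjoint C I ∧ C ∪ I = Set.univ ∧ IsClusterSet G C ∧ _root_.IsIndepSet G I

def openNbhd (G : SimpleGraph V) (S : Set V) : Set V :=
  {v | v ∉ S ∧ ∃ u ∈ S, G.Adj u v}

def IsChair (G : SimpleGraph V) (a b c d e : V) : Prop :=
  a ≠ b ∧ a ≠ c ∧ a ≠ d ∧ a ≠ e ∧ b ≠ c ∧ b ≠ d ∧ b ≠ e ∧ c ≠ d ∧ c ≠ e ∧ d ≠ e ∧
  G.Adj a b ∧ G.Adj b c ∧ G.Adj b d ∧ G.Adj d e ∧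
  ¬ G.Adj a c ∧ ¬ G.Adj a d ∧ ¬ G.Adj a e ∧ ¬ G.Adj c d ∧ ¬ G.Adj c e ∧ ¬ G.Adj b e

def ChairFreeAfter (G : SimpleGraph V) (X : Set V) : Prop :=
  ¬ ∃ a b c d e : V, a ∉ X ∧ b ∉ X ∧ c ∉ X ∧ d ∉ X ∧ e ∉ X ∧ IsChair G a b c d e

def IsClaw (G : SimpleGraph V) (u v w x : V) : Prop :=
  v ≠ w ∧ v ≠ x ∧ w ≠ x ∧
  G.Adj u v ∧ G.Adj u w ∧ G.Adj u x ∧ ¬ G.Adj v w ∧ ¬ G.Adj v x ∧ ¬ G.Adj w x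

def ClawFreeAfter (G : SimpleGraph V) (X : Set V) : Prop :=
  ¬ ∃ u v w x : V, u ∉ X ∧ v ∉ X ∧ w ∉ X ∧ x ∉ X ∧ IsClaw G u v w x

def IsInducedC4 (G : SimpleGraph V) (p q r s : V) : Prop :=
  p ≠ q ∧ p ≠ r ∧ p ≠ s ∧ q ≠ r ∧ q ≠ s ∧ r ≠ s ∧
  G.Adj p q ∧ G.Adj q r ∧ G.Adj r s ∧ G.Adj s p ∧ ¬ G.Adj p r ∧ ¬ G.Adj q s

def IsCBadP3 (G : SimpleGraph V) (C' : Set V) (u v w : V) : Prop :=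
  u ≠ w ∧ G.Adj u v ∧ G.Adj v w ∧ ¬ G.Adj u w ∧
  (∀ x : V, (x = u ∨ x = v ∨ x = w ∨ G.Adj u x ∨ G.Adj v x ∨ G.Adj w x) → x ∉ C') ∧
  (∀ p : V, (p = u ∨ p = v ∨ p = w) → ¬ ∃ x y : V, G.Adj p x ∧ G.Adj p y ∧ G.Adj x y) ∧
  (¬ ∃ x y : V, IsInducedC4 G u v x y) ∧ (¬ ∃ x y : V, IsInducedC4 G v w x y)

/-!
Deleting `x` from a monopolar partition of `G` leaves one of `G - x`. Conversely, since `x` has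
a single neighbour `y`, it has no neighbour on one side of a partition `C ⊎ I` of `G - x`: if
`y ∉ I` then `x` can join the independent side `I`, and if `y ∉ C` it can join `C` as an
isolated vertex of the cluster graph `G[C]`.
-/

section

variable {G : SimpleGraph V} {C D I J : Set V} {x : V}

theorem IsClusterSet.mono (hC : IsClusterSet G C) (hDC : D ⊆ C) : IsClusterSet G D :=
  fun _ _ _ hu hv hw ↦ hC (hDC hu) (hDC hv) (hDC hw)

theorem IsIndepSet.mono (hI : _root_.IsIndepSet G I) (hJI : J ⊆ I) : _root_.IsIndepSet G J :=
  fun _ _ hu hv ↦ hI (hJI hu) (hJI hv)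

theorem IsClusterSet.insert_of_forall_not_adj (hC : IsClusterSet G C)
    (hx : ∀ v ∈ C, ¬ G.Adj x v) : IsClusterSet G (insert x C) := by
  intro u v w hu hv hw huv hvw huw
  obtain rfl | hu := hu
  · obtain rfl | hv := hv
    exacts [absurd huv (G.loopless.irrefl _), absurd huv (hx v hv)]
  obtain rfl | hv := hv
  · exact absurd huv.symm (hx u hu)
  obtain rfl | hw := hw
  · exact absurd hvw.symm (hx v hv)
  exact hC hu hv hw huv hvw huw

theorem IsIndepSet.insert_of_forall_not_adj (hI : _root_.IsIndepSet G I)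
    (hx : ∀ v ∈ I, ¬ G.Adj x v) : _root_.IsIndepSet G (insert x I) := by
  rintro u v (rfl | hu) (rfl | hv) huv
  · exact G.loopless.irrefl _ huv
  · exact hx v hv huv
  · exact hx u hu huv.symm
  · exact hI hu hv huv

theorem IsMonopolarPartition.diff_singleton (h : IsMonopolarPartition G C I) (x : V) :
    Disjoint (C \ {x}) (I \ {x}) ∧ C \ {x} ∪ I \ {x} = {x}ᶜ ∧
      IsClusterSet G (C \ {x}) ∧ _root_.IsIndepSet G (I \ {x}) := by
  obtain ⟨hCI, hcover, hC, hI⟩ := h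
  refine ⟨hCI.mono Set.sdiff_subset Set.sdiff_subset, ?_, hC.mono Set.sdiff_subset,
    hI.mono Set.sdiff_subset⟩
  rw [← Set.union_sdiff_distrib, hcover, Set.compl_eq_univ_sdiff]

theorem exists_monopolar_insert (hCI : Disjoint C I) (hcover : C ∪ I = {x}ᶜ)
    (hC : IsClusterSet G C) (hI : _root_.IsIndepSet G I)
    (hx : (∀ v ∈ C, ¬ G.Adj x v) ∨ ∀ v ∈ I, ¬ G.Adj x v) :
    ∃ C₀ I₀ : Set V, IsMonopolarPartition G C₀ I₀ ∧ C ⊆ C₀ ∧ I ⊆ I₀ := by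
  obtain ⟨hxC, hxI⟩ : x ∉ C ∧ x ∉ I := not_or.mp (show x ∉ C ∪ I by simp [hcover])
  have hcover' : insert x (C ∪ I) = Set.univ := by
    rw [hcover, Set.insert_eq, Set.union_compl_self]
  rcases hx with hxC' | hxI'
  · refine ⟨insert x C, I, ⟨?_, ?_, hC.insert_of_forall_not_adj hxC', hI⟩,
      Set.subset_insert x C, subset_rfl⟩
    · exact Set.disjoint_insert_left.mpr ⟨hxI, hCI⟩
    · rwa [Set.insert_union]
  · refine ⟨C, insert x I, ⟨?_, ?_, hC, hI.insert_of_forall_not_adj hxI'⟩,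
      subset_rfl, Set.subset_insert x I⟩
    · exact Set.disjoint_insert_right.mpr ⟨hxC, hCI⟩
    · rwa [Set.union_insert]

theorem forall_not_adj_or_forall_not_adj_of_degree_eq_one [Fintype (G.neighborSet x)]
    (hdeg : G.degree x = 1) (hCI : Disjoint C I) :
    (∀ v ∈ C, ¬ G.Adj x v) ∨ ∀ v ∈ I, ¬ G.Adj x v := by
  obtain ⟨y, -, hy⟩ := degree_eq_one_iff_existsUnique_adj.mp hdeg
  by_cases hyC : y ∈ C
  · exact .inr fun v hv hxv ↦ hCI.notMem_of_mem_left hyC (hy v hxv ▸ hv)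
  · exact .inl fun v hv hxv ↦ hyC (hy v hxv ▸ hv)

end

theorem stmt6_general [Fintype V] (G : SimpleGraph V) [DecidableRel G.Adj]
    (C' I' : Set V) (x : V) (hx : x ∉ C' ∪ I')
    (hdeg : G.degree x = 1) :
    (∃ C I : Set V, IsMonopolarPartition G C I ∧ C' ⊆ C ∧ I' ⊆ I) ↔
    (∃ C I : Set V, Disjoint C I ∧ C ∪ I = {x}ᶜ ∧
      IsClusterSet G C ∧ _root_.IsIndepSet G I ∧ C' ⊆ C ∧ I' ⊆ I) := by
  constructor
  · rintro ⟨C, I, hpart, hC', hI'⟩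
    obtain ⟨hxC', hxI'⟩ := not_or.mp hx
    obtain ⟨hCI, hcover, hC, hI⟩ := hpart.diff_singleton x
    exact ⟨C \ {x}, I \ {x}, hCI, hcover, hC, hI, Set.subset_sdiff_singleton hC' hxC',
      Set.subset_sdiff_singleton hI' hxI'⟩
  · rintro ⟨C, I, hCI, hcover, hC, hI, hC', hI'⟩
    obtain ⟨C₀, I₀, hpart, hCC₀, hII₀⟩ := exists_monopolar_insert hCI hcover hC hI
      (forall_not_adj_or_forall_not_adj_of_degree_eq_one hdeg hCI)
    exact ⟨C₀, I₀, hpart, hC'.trans hCC₀, hI'.trans hII₀⟩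

theorem stmt6 [Fintype V] (G : SimpleGraph V) [DecidableRel G.Adj]
    (C' I' : Set V) (hdisj : Disjoint C' I') (x : V) (hx : x ∉ C' ∪ I')
    (hdeg : G.degree x = 1) :
    (∃ C I : Set V, IsMonopolarPartition G C I ∧ C' ⊆ C ∧ I' ⊆ I) ↔
    (∃ C I : Set V, Disjoint C I ∧ C ∪ I = {x}ᶜ ∧
      IsClusterSet G C ∧ _root_.IsIndepSet G I ∧ C' ⊆ C ∧ I' ⊆ I) :=
  stmt6_general G C' I' x hx hdeg
end

section
/- Let G = (V,E) be a graph in which every vertex not in C' has degree at least 2, with C' a vertex modulator of G to chair-free graphs, and let u,v,w be a C'-bad induced P3 (middle vertex v). Then |N(u) \ {v}| = 1 and |N(w) \ {v}| = 1; in particular both end-vertices u and w have degree exactly 2 in G. -/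
open SimpleGraph

variable {V : Type*}

/-! Since `u ∉ C'` has degree at least 2, it has a neighbour `x ≠ v`. A second one `y` would give
the chair `y u x v w` outside `C'`: `x` and `y` are adjacent neither to each other nor to `v`
because `u` lies in no triangle, and not to `w` because `u v w x` would be an induced `C4`. -/

namespace SimpleGraph

theorem ncard_neighborSet_eq_degree [Fintype V] (G : SimpleGraph V) [DecidableRel G.Adj] (u : V) :
    (G.neighborSet u).ncard = G.degree u := by
  rw [Set.ncard_eq_toFinset_card', ← neighborFinset_def, card_neighborFinset_eq_degree]

theorem degree_eq_two_of_subsingleton_neighborSet_sdiff [Fintype V] {G : SimpleGraph V}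
    [DecidableRel G.Adj] {u v : V} (huv : G.Adj u v) (hdeg : 2 ≤ G.degree u)
    (hsub : (G.neighborSet u \ {v}).Subsingleton) :
    (G.neighborSet u \ {v}).ncard = 1 ∧ G.degree u = 2 := by
  have hcard : (G.neighborSet u \ {v}).ncard + 1 = G.degree u := by
    rw [Set.ncard_sdiff_singleton_add_one (s := G.neighborSet u) huv, ncard_neighborSet_eq_degree]
  have hle : (G.neighborSet u \ {v}).ncard ≤ 1 := Set.ncard_le_one_iff_subsingleton.mpr hsub
  omega

end SimpleGraph

variable {G : SimpleGraph V} {C' : Set V} {u v w : V}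

theorem IsInducedC4.reverse {p q r s : V} (h : IsInducedC4 G p q r s) : IsInducedC4 G q p s r := by
  obtain ⟨hpq, hpr, hps, hqr, hqs, hrs, apq, aqr, ars, asp, npr, nqs⟩ := h
  exact ⟨hpq.symm, hqs, hqr, hps, hpr, hrs.symm, apq.symm, asp.symm, ars.symm, aqr.symm, nqs, npr⟩

namespace IsCBadP3

theorem symm (h : IsCBadP3 G C' u v w) : IsCBadP3 G C' w v u := by
  obtain ⟨huw, huv, hvw, nuw, hC', htri, hC4uv, hC4vw⟩ := h
  refine ⟨huw.symm, hvw.symm, huv.symm, fun h ↦ nuw h.symm, fun x hx ↦ hC' x (by tauto),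
    fun p hp ↦ htri p (by tauto), ?_, ?_⟩
  · rintro ⟨x, y, hc⟩
    exact hC4vw ⟨y, x, hc.reverse⟩
  · rintro ⟨x, y, hc⟩
    exact hC4uv ⟨y, x, hc.reverse⟩

theorem not_adj_of_adj_left (h : IsCBadP3 G C' u v w) {x : V} (hux : G.Adj u x) (hxv : x ≠ v) :
    ¬ G.Adj x v ∧ ¬ G.Adj x w := by
  obtain ⟨huw, huv, hvw, nuw, -, htri, hC4uv, -⟩ := h
  have nxv : ¬ G.Adj x v := fun hxv' ↦ htri u (Or.inl rfl) ⟨x, v, hux, huv, hxv'⟩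
  refine ⟨nxv, fun hxw ↦ hC4uv ⟨w, x, ?_⟩⟩
  exact ⟨huv.ne, huw, hux.ne, hvw.ne, hxv.symm, hxw.ne.symm, huv, hvw, hxw.symm, hux.symm, nuw,
    fun h ↦ nxv h.symm⟩

theorem subsingleton_neighborSet_sdiff_left (hmod : ChairFreeAfter G C')
    (h : IsCBadP3 G C' u v w) : (G.neighborSet u \ {v}).Subsingleton := by
  rintro x ⟨hux, hxv⟩ y ⟨huy, hyv⟩
  by_contra hxy
  have hxv : x ≠ v := hxv
  have hyv : y ≠ v := hyv
  obtain ⟨nxv, nxw⟩ := h.not_adj_of_adj_left hux hxv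
  obtain ⟨nyv, nyw⟩ := h.not_adj_of_adj_left huy hyv
  obtain ⟨huw, huv, hvw, nuw, hC', htri, -, -⟩ := h
  have nyx : ¬ G.Adj y x := fun hyx ↦ htri u (Or.inl rfl) ⟨y, x, huy, hux, hyx⟩
  refine hmod ⟨y, u, x, v, w, hC' y (by tauto), hC' u (by tauto), hC' x (by tauto),
    hC' v (by tauto), hC' w (by tauto), ?_⟩
  exact ⟨huy.ne.symm, Ne.symm hxy, hyv, fun hyw ↦ nuw (hyw ▸ huy), hux.ne, huv.ne, huw, hxv,
    fun hxw ↦ nuw (hxw ▸ hux), hvw.ne, huy.symm, hux, huv, hvw, nyx, nyv, nyw, nxv, nxw, nuw⟩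

theorem ncard_neighborSet_sdiff_left [Fintype V] [DecidableRel G.Adj]
    (hdeg : ∀ v : V, v ∉ C' → 2 ≤ G.degree v) (hmod : ChairFreeAfter G C')
    (h : IsCBadP3 G C' u v w) : (G.neighborSet u \ {v}).ncard = 1 ∧ G.degree u = 2 := by
  obtain ⟨-, huv, -, -, hC', -⟩ := id h
  exact SimpleGraph.degree_eq_two_of_subsingleton_neighborSet_sdiff huv (hdeg u (hC' u (by tauto)))
    (h.subsingleton_neighborSet_sdiff_left hmod)

end IsCBadP3

theorem stmt12 [Fintype V] (G : SimpleGraph V) [DecidableRel G.Adj] (C' : Set V)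
    (hdeg : ∀ v : V, v ∉ C' → 2 ≤ G.degree v)
    (hmod : ChairFreeAfter G C') (u v w : V) (hbad : IsCBadP3 G C' u v w) :
    (G.neighborSet u \ {v}).ncard = 1 ∧ (G.neighborSet w \ {v}).ncard = 1 ∧
    G.degree u = 2 ∧ G.degree w = 2 := by
  obtain ⟨hu, hdu⟩ := hbad.ncard_neighborSet_sdiff_left hdeg hmod
  obtain ⟨hw, hdw⟩ := hbad.symm.ncard_neighborSet_sdiff_left hdeg hmod
  exact ⟨hu, hw, hdu, hdw⟩
end
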